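/- Let β, δ be real numbers with β > 1 and (δ+1)·ln β > 1, and let w, κ be real numbers with 1 < w ≤ κ. If κ - 1 ≤ (w - 1)·ln β, then (κ/w)·(1 - 1/w)^(κ-1) ≥ 1/β. -/

import Mathlib

/-!
Since `log x ≤ x - 1` at `x = w / (w - 1)`, we get `1 - 1/w ≥ exp (-1/(w-1))`, hence
`(1 - 1/w)^(κ-1) ≥ exp (-(κ-1)/(w-1)) ≥ exp (-log β) = 1/β`; the factor `κ/w ≥ 1` only helps.
-/

open Real

lemma exp_neg_inv_sub_one_le_one_sub_inv {w : ℝ} (hw : 1 < w) :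
    exp (-(1 / (w - 1))) ≤ 1 - 1 / w := by
  have hw1 : 0 < w - 1 := by linarith
  have hlog : log (w / (w - 1)) ≤ 1 / (w - 1) := by
    have := log_le_sub_one_of_pos (x := w / (w - 1)) (by positivity)
    rwa [show w / (w - 1) - 1 = 1 / (w - 1) by field_simp; ring] at this
  have hinv : 1 - 1 / w = (w / (w - 1))⁻¹ := by field_simp
  rw [hinv, ← exp_log (show 0 < (w / (w - 1))⁻¹ by positivity), log_inv]
  exact exp_le_exp.mpr (neg_le_neg hlog)

lemma exp_neg_div_sub_one_le_one_sub_inv_rpow {w t : ℝ} (hw : 1 < w) (ht : 0 ≤ t) :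
    exp (-(t / (w - 1))) ≤ (1 - 1 / w) ^ t := by
  calc exp (-(t / (w - 1))) = exp (-(1 / (w - 1))) ^ t := by
        rw [← exp_mul]; ring_nf
    _ ≤ (1 - 1 / w) ^ t :=
        rpow_le_rpow (exp_pos _).le (exp_neg_inv_sub_one_le_one_sub_inv hw) ht

theorem stmt_3_general (β w κ : ℝ) (hβ : 1 < β)
    (hw : 1 < w) (hwκ : w ≤ κ) (h : κ - 1 ≤ (w - 1) * Real.log β) :
    (κ / w) * (1 - 1 / w) ^ (κ - 1) ≥ 1 / β := by
  have hw1 : 0 < w - 1 := by linarith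
  have hexponent : -log β ≤ -((κ - 1) / (w - 1)) := by
    rw [neg_le_neg_iff, div_le_iff₀ hw1]
    linarith
  have hbase : 0 ≤ 1 - 1 / w := (exp_pos _).le.trans (exp_neg_inv_sub_one_le_one_sub_inv hw)
  have hκw : 1 ≤ κ / w := (one_le_div (by linarith)).mpr hwκ
  calc 1 / β = exp (-log β) := by rw [exp_neg, exp_log (by linarith), one_div]
    _ ≤ exp (-((κ - 1) / (w - 1))) := exp_le_exp.mpr hexponent
    _ ≤ (1 - 1 / w) ^ (κ - 1) := exp_neg_div_sub_one_le_one_sub_inv_rpow hw (by linarith)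
    _ ≤ (κ / w) * (1 - 1 / w) ^ (κ - 1) := le_mul_of_one_le_left (rpow_nonneg hbase _) hκw

theorem stmt_3 (β δ w κ : ℝ) (hβ : 1 < β) (hδβ : (δ + 1) * Real.log β > 1)
    (hw : 1 < w) (hwκ : w ≤ κ) (h : κ - 1 ≤ (w - 1) * Real.log β) :
    (κ / w) * (1 - 1 / w) ^ (κ - 1) ≥ 1 / β :=
  stmt_3_general β w κ hβ hw hwκ h
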